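/- arXiv:1902.10774 — 3 statements merged into one kernel-verified Lean document; each statement's English description precedes it below -/
import Mathlib

section
/- Let τ > 0 and let h, H : [0, τ) → ℝ be continuously differentiable functions such that H(0) ≥ 0, |h(0)| ≤ H(0), and H'(t) ≥ |h'(t)| − h(t)² + H(t)² for every t ∈ [0, τ). Then |h(t)| ≤ H(t) for every t ∈ [0, τ), and moreover H'(t) ≥ 0 for every t ∈ [0, τ) (so H is nondecreasing on [0, τ)). -/
open Set

private lemma riccati_aux (a b : ℝ) (hab : a ≤ b) (f f' c : ℝ → ℝ)
    (hf : ∀ t ∈ Icc a b, HasDerivAt f (f' t) t)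
    (hge : ∀ t ∈ Icc a b, c t * f t ≤ f' t)
    (K : ℝ) (hK : ∀ t ∈ Icc a b, c t ≤ K)
    (h0 : 0 ≤ f a) : 0 ≤ f b := by
  by_contra hb
  push_neg at hb
  set S : Set ℝ := Icc a b ∩ f ⁻¹' Ici 0 with hSdef
  have hfc : ContinuousOn f (Icc a b) := fun x hx => (hf x hx).continuousAt.continuousWithinAt
  have hScl : IsClosed S := hfc.preimage_isClosed_of_isClosed isClosed_Icc isClosed_Ici
  have haS : a ∈ S := ⟨⟨le_refl a, hab⟩, h0⟩
  have hbdd : BddAbove S := ⟨b, fun x hx => hx.1.2⟩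
  set s := sSup S with hs
  have hsS : s ∈ S := hScl.csSup_mem ⟨a, haS⟩ hbdd
  have hsa : a ≤ s := le_csSup hbdd haS
  have hsb : s < b := lt_of_le_of_ne hsS.1.2 (by
    intro e
    rw [e] at hsS
    exact absurd hsS.2 (not_le.mpr hb))
  have hneg : ∀ x ∈ Ioo s b, f x < 0 := by
    intro x hx
    by_contra hfx
    push_neg at hfx
    have : x ∈ S := ⟨⟨hsa.trans hx.1.le, hx.2.le⟩, hfx⟩
    exact absurd (le_csSup hbdd this) (not_le.mpr hx.1)
  set g : ℝ → ℝ := fun t => f t * Real.exp (-K * t) with hg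
  have hsub : Icc s b ⊆ Icc a b := Icc_subset_Icc hsa le_rfl
  have hgderiv : ∀ x ∈ Ioo s b, HasDerivAt g ((f' x - K * f x) * Real.exp (-K * x)) x := by
    intro x hx
    have hx' : x ∈ Icc a b := hsub ⟨hx.1.le, hx.2.le⟩
    have h1 : HasDerivAt (fun t : ℝ => Real.exp (-K * t)) (Real.exp (-K * x) * (-K)) x := by
      have h0 : HasDerivAt (fun t : ℝ => -K * t) (-K) x := by
        simpa using (hasDerivAt_id x).const_mul (-K)
      simpa [mul_comm] using h0.exp
    have : HasDerivAt (fun y => f y * Real.exp (-K * y)) _ x := (hf x hx').mul h1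
    convert this using 1
    ring
  have hginterior : interior (Icc s b) = Ioo s b := interior_Icc
  have hmono : MonotoneOn g (Icc s b) := by
    apply monotoneOn_of_deriv_nonneg (convex_Icc s b)
    · exact (hfc.mono hsub).mul (Real.continuous_exp.comp (continuous_const.mul continuous_id)).continuousOn
    · intro x hx
      rw [hginterior] at hx
      exact (hgderiv x hx).differentiableAt.differentiableWithinAt
    · intro x hx
      rw [hginterior] at hx
      rw [(hgderiv x hx).deriv]
      have hx' : x ∈ Icc a b := hsub ⟨hx.1.le, hx.2.le⟩
      have h2 : K * f x ≤ c x * f x := by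
        have := hK x hx'
        nlinarith [hneg x hx]
      have : 0 ≤ f' x - K * f x := by linarith [hge x hx']
      positivity
  have h3 : g s ≤ g b := hmono ⟨le_rfl, hsb.le⟩ ⟨hsb.le, le_rfl⟩ hsb.le
  have h4 : 0 ≤ g s := mul_nonneg hsS.2 (Real.exp_pos _).le
  have h5 : 0 ≤ f b := by
    have h6 := h4.trans h3
    simp only [hg] at h6
    nlinarith [Real.exp_pos (-K * b)]
  exact absurd h5 (not_le.mpr hb)

/-- Analytic core of Lemma 1: a Riccati-type comparison. If `H` is C¹ on `[0, τ)` with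
`H 0 ≥ 0`, `|h 0| ≤ H 0` and `H' t ≥ |h' t| − (h t)² + (H t)²` on `[0, τ)`, then
`|h t| ≤ H t` and `H' t ≥ 0` on `[0, τ)`. -/
theorem riccati_comparison (τ : ℝ) (hτ : 0 < τ) (h H h' H' : ℝ → ℝ)
    (hhderiv : ∀ t ∈ Ico (0 : ℝ) τ, HasDerivAt h (h' t) t)
    (hHderiv : ∀ t ∈ Ico (0 : ℝ) τ, HasDerivAt H (H' t) t)
    (hhcont : ContinuousOn h' (Ico (0 : ℝ) τ))
    (hHcont : ContinuousOn H' (Ico (0 : ℝ) τ))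
    (hH0 : 0 ≤ H 0)
    (hinit : |h 0| ≤ H 0)
    (hineq : ∀ t ∈ Ico (0 : ℝ) τ, |h' t| - (h t) ^ 2 + (H t) ^ 2 ≤ H' t) :
    ∀ t ∈ Ico (0 : ℝ) τ, |h t| ≤ H t ∧ 0 ≤ H' t := by
  intro t ht
  have hsub : Icc (0 : ℝ) t ⊆ Ico (0 : ℝ) τ := fun x hx => ⟨hx.1, lt_of_le_of_lt hx.2 ht.2⟩
  -- continuity of H + h and H - h on Icc 0 t
  have hHc : ContinuousOn H (Icc 0 t) := fun x hx =>
    (hHderiv x (hsub hx)).continuousAt.continuousWithinAt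
  have hhc : ContinuousOn h (Icc 0 t) := fun x hx =>
    (hhderiv x (hsub hx)).continuousAt.continuousWithinAt
  have hne : (Icc (0 : ℝ) t).Nonempty := ⟨0, le_refl 0, ht.1⟩
  -- bound K1 for H + h, K2 for H - h on Icc 0 t
  obtain ⟨x1, hx1, hmax1⟩ := (isCompact_Icc).exists_isMaxOn hne (hHc.add hhc)
  obtain ⟨x2, hx2, hmax2⟩ := (isCompact_Icc).exists_isMaxOn hne (hHc.sub hhc)
  -- H - h ≥ 0 at t
  have h1 : 0 ≤ (H t - h t) := by
    have := riccati_aux 0 t ht.1 (fun s => H s - h s) (fun s => H' s - h' s)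
      (fun s => H s + h s)
      (fun s hs => ((hHderiv s (hsub hs)).sub (hhderiv s (hsub hs))))
      (fun s hs => by
        have h2 := hineq s (hsub hs)
        have h3 : h' s ≤ |h' s| := le_abs_self _
        show (H s + h s) * (H s - h s) ≤ H' s - h' s
        have he : (H s + h s) * (H s - h s) = H s ^ 2 - h s ^ 2 := by ring
        linarith)
      (H x1 + h x1) (fun s hs => hmax1 hs)
      (by show (0:ℝ) ≤ H 0 - h 0; linarith [abs_le.mp hinit])
    simpa using this
  -- H + h ≥ 0 at t
  have h2 : 0 ≤ (H t + h t) := by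
    have := riccati_aux 0 t ht.1 (fun s => H s + h s) (fun s => H' s + h' s)
      (fun s => H s - h s)
      (fun s hs => ((hHderiv s (hsub hs)).add (hhderiv s (hsub hs))))
      (fun s hs => by
        have h2 := hineq s (hsub hs)
        have h3 : -h' s ≤ |h' s| := neg_le_abs _
        show (H s - h s) * (H s + h s) ≤ H' s + h' s
        have he : (H s - h s) * (H s + h s) = H s ^ 2 - h s ^ 2 := by ring
        linarith)
      (H x2 - h x2) (fun s hs => hmax2 hs)
      (by show (0:ℝ) ≤ H 0 + h 0; linarith [abs_le.mp hinit])
    simpa using this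
  have habs : |h t| ≤ H t := abs_le.mpr ⟨by linarith, by linarith⟩
  refine ⟨habs, ?_⟩
  have h4 := hineq t ht
  have h5 : (h t) ^ 2 ≤ (H t) ^ 2 := by nlinarith [abs_nonneg (h t), le_abs_self (h t), neg_le_abs (h t)]
  have h6 : 0 ≤ |h' t| := abs_nonneg _
  linarith
end

section
/- Let n ≥ 2, A ∈ ℝ, and let u : ℝⁿ → ℝ (ℝⁿ = EuclideanSpace ℝ (Fin n)) be three times continuously differentiable on a neighborhood of x₀ ∈ ℝⁿ. Suppose x₀ is a local maximum of x ↦ ‖∇u(x)‖·e^{A·u(x)} and ∇u(x₀) ≠ 0, and set e₁ = ∇u(x₀)/‖∇u(x₀)‖. Then: (i) D³u(x₀)(e₁, e₁, e₁) ≤ 2A²·‖∇u(x₀)‖³; and (ii) for every unit vector v orthogonal to ∇u(x₀): D³u(x₀)(v, v, e₁) ≤ −A·‖∇u(x₀)‖·D²u(x₀)(v, v). -/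
open scoped RealInnerProductSpace

/-- Hessian bilinear form `D²u(x)(v, w)`. -/
noncomputable def hess {n : ℕ} (u : EuclideanSpace ℝ (Fin n) → ℝ)
    (x v w : EuclideanSpace ℝ (Fin n)) : ℝ :=
  fderiv ℝ (fun y => fderiv ℝ u y v) x w

/-- Third derivative trilinear form `D³u(x)(v, w, r)`. -/
noncomputable def thirdDeriv {n : ℕ} (u : EuclideanSpace ℝ (Fin n) → ℝ)
    (x v w r : EuclideanSpace ℝ (Fin n)) : ℝ :=
  fderiv ℝ (fun y => fderiv ℝ (fun z => fderiv ℝ u z v) y w) x r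

/-- Second derivative test at a local maximum. -/
lemma snd_deriv_test_aux {φ φ₁ : ℝ → ℝ} {D : ℝ} (hmax : IsLocalMax φ 0)
    (hd : ∀ᶠ t in nhds (0:ℝ), HasDerivAt φ (φ₁ t) t) (hD : HasDerivAt φ₁ D 0) : D ≤ 0 := by
  have hφ₁0 : φ₁ 0 = 0 := hmax.hasDerivAt_eq_zero hd.self_of_nhds
  by_contra hpos
  push_neg at hpos
  have hslope : Filter.Tendsto (slope φ₁ 0) (nhdsWithin 0 {(0:ℝ)}ᶜ) (nhds D) :=
    hasDerivAt_iff_tendsto_slope.1 hD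
  have hev : ∀ᶠ t in nhdsWithin (0:ℝ) {(0:ℝ)}ᶜ, 0 < slope φ₁ 0 t :=
    hslope.eventually (eventually_gt_nhds hpos)
  rw [eventually_nhdsWithin_iff] at hev
  have hcomb : ∀ᶠ t in nhds (0:ℝ),
      (t ∈ ({(0:ℝ)}ᶜ : Set ℝ) → 0 < slope φ₁ 0 t) ∧ HasDerivAt φ (φ₁ t) t ∧ φ t ≤ φ 0 :=
    hev.and (hd.and hmax)
  obtain ⟨ε, hε, hball⟩ := Metric.eventually_nhds_iff_ball.1 hcomb
  have hεmem : ∀ t, |t| < ε → ((t ≠ 0 → 0 < slope φ₁ 0 t) ∧ HasDerivAt φ (φ₁ t) t ∧ φ t ≤ φ 0) := by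
    intro t ht
    have := hball t (by simpa [Metric.mem_ball, Real.dist_eq] using ht)
    simpa using this
  have hmono : StrictMonoOn φ (Set.Icc 0 (ε/2)) := by
    apply strictMonoOn_of_deriv_pos (convex_Icc _ _)
    · intro t ht
      have ht' : |t| < ε := by
        rw [abs_of_nonneg ht.1]; linarith [ht.2]
      exact ((hεmem t ht').2.1).continuousAt.continuousWithinAt
    · intro t ht
      rw [interior_Icc] at ht
      have ht' : |t| < ε := by
        rw [abs_of_nonneg ht.1.le]; linarith [ht.2]
      obtain ⟨hslopet, hdt, _⟩ := hεmem t ht'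
      have h1 : 0 < slope φ₁ 0 t := hslopet (ne_of_gt ht.1)
      rw [slope_def_field, hφ₁0, sub_zero, sub_zero] at h1
      rw [hdt.deriv]
      have := mul_pos h1 ht.1
      rwa [div_mul_cancel₀ _ (ne_of_gt ht.1)] at this
  have h2 : φ 0 < φ (ε/2) := hmono (Set.mem_Icc.2 ⟨le_rfl, by positivity⟩)
    (Set.mem_Icc.2 ⟨by positivity, le_rfl⟩) (by positivity)
  have h3 : φ (ε/2) ≤ φ 0 := by
    have : |ε/2| < ε := by rw [abs_of_pos (by positivity)]; linarith
    exact (hεmem _ this).2.2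
  linarith

/-- The inverse of `toDual` as a genuinely `ℝ`-linear continuous equiv. -/
noncomputable def Tdual (n : ℕ) :
    (EuclideanSpace ℝ (Fin n) →L[ℝ] ℝ) ≃L[ℝ] EuclideanSpace ℝ (Fin n) :=
  (InnerProductSpace.toDual ℝ (EuclideanSpace ℝ (Fin n))).symm.toContinuousLinearEquiv

section Bridges

variable {n : ℕ} {u : EuclideanSpace ℝ (Fin n) → ℝ} {x x₀ : EuclideanSpace ℝ (Fin n)}

local notation "E" => EuclideanSpace ℝ (Fin n)

lemma gradient_eq_Tdual : gradient u = (Tdual n) ∘ fderiv ℝ u := rfl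

lemma inner_Tdual (l : E →L[ℝ] ℝ) (w : E) : ⟪Tdual n l, w⟫ = l w :=
  InnerProductSpace.toDual_symm_apply

lemma hfderiv_diff (hx : ContDiffAt ℝ 2 u x) : DifferentiableAt ℝ (fderiv ℝ u) x :=
  (hx.fderiv_right (m := 1) (by norm_num)).differentiableAt one_ne_zero

lemma gradient_diff (hx : ContDiffAt ℝ 2 u x) : DifferentiableAt ℝ (gradient u) x := by
  rw [gradient_eq_Tdual]
  exact ((Tdual n).contDiff.comp_contDiffAt x
    (hx.fderiv_right (m := 1) (by norm_num))).differentiableAt one_ne_zero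

/-- Bridge 1. -/
lemma inner_fderiv_gradient (hx : ContDiffAt ℝ 2 u x) (v w : E) :
    ⟪fderiv ℝ (gradient u) x v, w⟫ = fderiv ℝ (fderiv ℝ u) x v w := by
  have h : fderiv ℝ (gradient u) x =
      ((Tdual n).toContinuousLinearMap).comp (fderiv ℝ (fderiv ℝ u) x) := by
    rw [gradient_eq_Tdual, ContinuousLinearEquiv.comp_fderiv]
  rw [h]
  exact inner_Tdual _ _

/-- hess in terms of the second fderiv. -/
lemma hess_eq (hx : ContDiffAt ℝ 2 u x) (v w : E) :
    hess u x w v = fderiv ℝ (fderiv ℝ u) x v w := by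
  unfold hess
  rw [fderiv_clm_apply (hfderiv_diff hx) (differentiableAt_const w)]
  simp

lemma inner_fderiv_gradient_hess (hx : ContDiffAt ℝ 2 u x) (v w : E) :
    ⟪fderiv ℝ (gradient u) x v, w⟫ = hess u x w v := by
  rw [inner_fderiv_gradient hx, hess_eq hx]

lemma hess_symm (hx : ContDiffAt ℝ 2 u x) (v w : E) :
    hess u x v w = hess u x w v := by
  rw [hess_eq hx, hess_eq hx, (hx.isSymmSndFDerivAt minSmoothness_of_isRCLikeNormedField.le).eq]

lemma fderiv_gradient_eq (hx : ContDiffAt ℝ 2 u x) :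
    fderiv ℝ (gradient u) x =
      ((Tdual n).toContinuousLinearMap).comp (fderiv ℝ (fderiv ℝ u) x) := by
  have h : gradient u = (Tdual n) ∘ fderiv ℝ u := rfl
  rw [h, ContinuousLinearEquiv.comp_fderiv]

lemma fderiv_gradient_eventually (hu3 : ∀ᶠ y in nhds x₀, ContDiffAt ℝ 3 u y) (v : E) :
    DifferentiableAt ℝ (fun y => fderiv ℝ (gradient u) y v) x₀ := by
  have hx : ContDiffAt ℝ 3 u x₀ := hu3.self_of_nhds
  have hB : ContDiffAt ℝ 1 (fderiv ℝ (fderiv ℝ u)) x₀ :=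
    (hx.fderiv_right (m := 2) (by norm_num)).fderiv_right (m := 1) (by norm_num)
  have hBv : DifferentiableAt ℝ (fun y => fderiv ℝ (fderiv ℝ u) y v) x₀ :=
    (hB.differentiableAt one_ne_zero).clm_apply (differentiableAt_const v)
  have heq : (fun y => fderiv ℝ (gradient u) y v) =ᶠ[nhds x₀]
      (fun y => (Tdual n) (fderiv ℝ (fderiv ℝ u) y v)) := by
    filter_upwards [hu3] with y hy
    rw [fderiv_gradient_eq (hy.of_le (by norm_num))]
    rfl
  have hR : DifferentiableAt ℝ (fun y => (Tdual n) (fderiv ℝ (fderiv ℝ u) y v)) x₀ :=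
    (Tdual n).differentiableAt.comp x₀ hBv
  exact (Filter.EventuallyEq.differentiableAt_iff heq).mpr hR

/-- Bridge 2: inner products with the second directional derivative of the gradient
give `thirdDeriv`. -/
lemma inner_fderiv2_gradient (hu3 : ∀ᶠ y in nhds x₀, ContDiffAt ℝ 3 u y) (v₁ v₂ w : E) :
    ⟪fderiv ℝ (fun y => fderiv ℝ (gradient u) y v₁) x₀ v₂, w⟫ = thirdDeriv u x₀ w v₁ v₂ := by
  have hx : ContDiffAt ℝ 3 u x₀ := hu3.self_of_nhds
  have hB : ContDiffAt ℝ 1 (fderiv ℝ (fderiv ℝ u)) x₀ :=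
    (hx.fderiv_right (m := 2) (by norm_num)).fderiv_right (m := 1) (by norm_num)
  have hBv : DifferentiableAt ℝ (fun y => fderiv ℝ (fderiv ℝ u) y v₁) x₀ :=
    (hB.differentiableAt one_ne_zero).clm_apply (differentiableAt_const v₁)
  have heq : (fun y => fderiv ℝ (gradient u) y v₁) =ᶠ[nhds x₀]
      (fun y => (Tdual n) (fderiv ℝ (fderiv ℝ u) y v₁)) := by
    filter_upwards [hu3] with y hy
    rw [fderiv_gradient_eq (hy.of_le (by norm_num))]
    rfl
  rw [heq.fderiv_eq]
  have hcomp : fderiv ℝ (fun y => (Tdual n) (fderiv ℝ (fderiv ℝ u) y v₁)) x₀ =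
      ((Tdual n).toContinuousLinearMap).comp
        (fderiv ℝ (fun y => fderiv ℝ (fderiv ℝ u) y v₁) x₀) := by
    have h : (fun y => (Tdual n) (fderiv ℝ (fderiv ℝ u) y v₁)) =
        (Tdual n) ∘ (fun y => fderiv ℝ (fderiv ℝ u) y v₁) := rfl
    rw [h, ContinuousLinearEquiv.comp_fderiv]
  rw [hcomp]
  have h1 : ⟪((Tdual n).toContinuousLinearMap).comp
      (fderiv ℝ (fun y => fderiv ℝ (fderiv ℝ u) y v₁) x₀) v₂, w⟫ =
      (fderiv ℝ (fun y => fderiv ℝ (fderiv ℝ u) y v₁) x₀ v₂) w := inner_Tdual _ _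
  rw [h1]
  have h2 : (fderiv ℝ (fun y => fderiv ℝ (fderiv ℝ u) y v₁) x₀ v₂) w =
      fderiv ℝ (fun y => fderiv ℝ (fderiv ℝ u) y v₁ w) x₀ v₂ := by
    rw [fderiv_clm_apply hBv (differentiableAt_const w)]
    simp
  rw [h2]
  have h3 : (fun y => fderiv ℝ (fderiv ℝ u) y v₁ w) =ᶠ[nhds x₀]
      (fun y => fderiv ℝ (fun z => fderiv ℝ u z w) y v₁) := by
    filter_upwards [hu3] with y hy
    exact (hess_eq (hy.of_le (by norm_num)) v₁ w).symm
  rw [h3.fderiv_eq]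
  rfl

lemma third_symm12 (hu3 : ∀ᶠ y in nhds x₀, ContDiffAt ℝ 3 u y) (v w r : E) :
    thirdDeriv u x₀ v w r = thirdDeriv u x₀ w v r := by
  have h : (fun y => hess u y v w) =ᶠ[nhds x₀] (fun y => hess u y w v) := by
    filter_upwards [hu3] with y hy
    exact hess_symm (hy.of_le (by norm_num)) v w
  calc thirdDeriv u x₀ v w r = fderiv ℝ (fun y => hess u y v w) x₀ r := rfl
    _ = fderiv ℝ (fun y => hess u y w v) x₀ r := by rw [h.fderiv_eq]
    _ = thirdDeriv u x₀ w v r := rfl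

lemma third_symm23 (hu3 : ∀ᶠ y in nhds x₀, ContDiffAt ℝ 3 u y) (v w r : E) :
    thirdDeriv u x₀ v w r = thirdDeriv u x₀ v r w := by
  have hx : ContDiffAt ℝ 3 u x₀ := hu3.self_of_nhds
  have hfv : ContDiffAt ℝ 2 (fun z => fderiv ℝ u z v) x₀ :=
    (ContinuousLinearMap.apply ℝ ℝ v).contDiff.comp_contDiffAt x₀
      (hx.fderiv_right (m := 2) (by norm_num))
  have hdfv : DifferentiableAt ℝ (fderiv ℝ (fun z => fderiv ℝ u z v)) x₀ := hfderiv_diff hfv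
  have key : ∀ a b : E, fderiv ℝ (fun y => fderiv ℝ (fun z => fderiv ℝ u z v) y a) x₀ b =
      fderiv ℝ (fderiv ℝ (fun z => fderiv ℝ u z v)) x₀ b a := by
    intro a b
    rw [fderiv_clm_apply hdfv (differentiableAt_const a)]
    simp
  calc thirdDeriv u x₀ v w r
      = fderiv ℝ (fderiv ℝ (fun z => fderiv ℝ u z v)) x₀ r w := key w r
    _ = fderiv ℝ (fderiv ℝ (fun z => fderiv ℝ u z v)) x₀ w r :=
        (hfv.isSymmSndFDerivAt minSmoothness_of_isRCLikeNormedField.le).eq r w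
    _ = thirdDeriv u x₀ v r w := (key r w).symm

lemma third_smul3 (c : ℝ) (v w r : E) :
    thirdDeriv u x₀ v w (c • r) = c * thirdDeriv u x₀ v w r := by
  unfold thirdDeriv
  rw [map_smul]
  rfl

/-- First- and second-order conditions at a local max of `‖∇u‖e^{Au}` in direction `v`. -/
lemma key_conditions (A : ℝ) (hu3 : ∀ᶠ y in nhds x₀, ContDiffAt ℝ 3 u y)
    (hmax : IsLocalMax (fun x => ‖gradient u x‖ * Real.exp (A * u x)) x₀) (v : E) :
    ⟪gradient u x₀, fderiv ℝ (gradient u) x₀ v⟫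
      + A * ⟪gradient u x₀, v⟫ * ⟪gradient u x₀, gradient u x₀⟫ = 0 ∧
    ⟪fderiv ℝ (gradient u) x₀ v, fderiv ℝ (gradient u) x₀ v⟫
      + ⟪gradient u x₀, fderiv ℝ (fun y => fderiv ℝ (gradient u) y v) x₀ v⟫
      + A * ⟪fderiv ℝ (gradient u) x₀ v, v⟫ * ⟪gradient u x₀, gradient u x₀⟫
      + 2 * A * ⟪gradient u x₀, v⟫ * ⟪gradient u x₀, fderiv ℝ (gradient u) x₀ v⟫ ≤ 0 := by
  classical
  set G : E → E := gradient u with hGdef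
  set γ : ℝ → E := fun t => x₀ + t • v with hγdef
  have hγ0 : γ 0 = x₀ := by simp [hγdef]
  have hγd : ∀ t : ℝ, HasDerivAt γ v t := by
    intro t
    have h := ((hasDerivAt_id t).smul_const v).const_add x₀
    simp only [id_eq, one_smul] at h
    exact h
  have hγc : Continuous γ := by fun_prop
  have htend : Filter.Tendsto γ (nhds 0) (nhds x₀) := by
    rw [← hγ0]; exact (hγc.continuousAt)
  have hC3 : ∀ᶠ t in nhds (0:ℝ), ContDiffAt ℝ 3 u (γ t) := htend.eventually hu3
  set P : E → E := fun y => fderiv ℝ G y v with hPdef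
  set φ : ℝ → ℝ := fun t => ⟪G (γ t), G (γ t)⟫ * Real.exp (2*A*u (γ t)) with hφdef
  set φ₁ : ℝ → ℝ := fun t =>
    (2*⟪G (γ t), P (γ t)⟫ + 2*A*(⟪G (γ t), v⟫*⟪G (γ t), G (γ t)⟫)) * Real.exp (2*A*u (γ t))
    with hφ₁def
  have hmaxφ : IsLocalMax φ 0 := by
    have h1 : IsLocalMax (fun t => ‖G (γ t)‖ * Real.exp (A * u (γ t))) 0 := by
      have h2 : IsMaxFilter (fun x => ‖G x‖ * Real.exp (A * u x)) (nhds x₀) (γ 0) := by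
        rw [hγ0]; exact hmax
      exact h2.comp_tendsto htend
    have hval : ∀ t : ℝ, φ t = (‖G (γ t)‖ * Real.exp (A * u (γ t)))^2 := by
      intro t
      have hexp2 : Real.exp (A * u (γ t)) ^ 2 = Real.exp (2*A*u (γ t)) := by
        rw [pow_two, ← Real.exp_add]; ring_nf
      rw [hφdef]
      simp only [real_inner_self_eq_norm_sq, mul_pow, hexp2]
    have hev : ∀ᶠ t in nhds (0:ℝ), φ t ≤ φ 0 := by
      filter_upwards [h1] with t ht
      rw [hval t, hval 0]
      exact pow_le_pow_left₀ (by positivity) ht 2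
    exact hev
  have hd : ∀ᶠ t in nhds (0:ℝ), HasDerivAt φ (φ₁ t) t := by
    filter_upwards [hC3] with t ht
    have hL : HasFDerivAt u (fderiv ℝ u (γ t)) (γ t) :=
      (ht.differentiableAt (by norm_num)).hasFDerivAt
    have hau : HasDerivAt (fun s => u (γ s)) (fderiv ℝ u (γ t) v) t :=
      hL.comp_hasDerivAt t (hγd t)
    have hGd : DifferentiableAt ℝ G (γ t) := gradient_diff (ht.of_le (by norm_num))
    have hgg : HasDerivAt (fun s => G (γ s)) (P (γ t)) t :=
      hGd.hasFDerivAt.comp_hasDerivAt t (hγd t)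
    have hinner : HasDerivAt (fun s => ⟪G (γ s), G (γ s)⟫)
        (⟪G (γ t), P (γ t)⟫ + ⟪P (γ t), G (γ t)⟫) t := hgg.inner ℝ hgg
    have hexp : HasDerivAt (fun s => Real.exp (2*A*u (γ s)))
        (Real.exp (2*A*u (γ t)) * (2*A*(fderiv ℝ u (γ t) v))) t :=
      (hau.const_mul (2*A)).exp
    have hmul := hinner.mul hexp
    have hfe : fderiv ℝ u (γ t) v = ⟪G (γ t), v⟫ := (inner_Tdual _ v).symm
    refine HasDerivAt.congr_deriv hmul ?_
    rw [hfe]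
    have hcomm : ⟪P (γ t), G (γ t)⟫ = ⟪G (γ t), P (γ t)⟫ := real_inner_comm _ _
    rw [hcomm]
    ring
  have hφ₁0 : φ₁ 0 = 0 := hmaxφ.hasDerivAt_eq_zero hd.self_of_nhds
  have hφ₁0' : (2*⟪G x₀, P x₀⟫ + 2*A*(⟪G x₀, v⟫*⟪G x₀, G x₀⟫)) * Real.exp (2*A*u x₀) = 0 := by
    have h := hφ₁0
    rw [hφ₁def] at h
    simpa only [hγ0] using h
  have hexp0 : Real.exp (2*A*u x₀) ≠ 0 := Real.exp_ne_zero _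
  have hfirst : ⟪G x₀, P x₀⟫ + A*(⟪G x₀, v⟫*⟪G x₀, G x₀⟫) = 0 := by
    rcases mul_eq_zero.mp hφ₁0' with h | h
    · linarith
    · exact absurd h hexp0
  have hx0 : ContDiffAt ℝ 3 u x₀ := hu3.self_of_nhds
  have hGd0 : DifferentiableAt ℝ G (γ 0) := by
    rw [hγ0]; exact gradient_diff (hx0.of_le (by norm_num))
  have hgg0 : HasDerivAt (fun s => G (γ s)) (P x₀) 0 := by
    have h := hGd0.hasFDerivAt.comp_hasDerivAt 0 (hγd 0)
    rw [hγ0] at h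
    exact h
  set Q : E := fderiv ℝ (fun y => fderiv ℝ G y v) x₀ v with hQdef
  have hPd0 : DifferentiableAt ℝ (fun y => fderiv ℝ G y v) (γ 0) := by
    rw [hγ0]; exact fderiv_gradient_eventually hu3 v
  have hpp0 : HasDerivAt (fun s => P (γ s)) Q 0 := by
    have h := hPd0.hasFDerivAt.comp_hasDerivAt 0 (hγd 0)
    rw [hγ0] at h
    exact h
  have hau0 : HasDerivAt (fun s => u (γ s)) (⟪G x₀, v⟫) 0 := by
    have hL : HasFDerivAt u (fderiv ℝ u (γ 0)) (γ 0) := by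
      rw [hγ0]; exact (hx0.differentiableAt (by norm_num)).hasFDerivAt
    have h := hL.comp_hasDerivAt 0 (hγd 0)
    rw [hγ0] at h
    have hfe0 : fderiv ℝ u x₀ v = ⟪G x₀, v⟫ := (inner_Tdual _ v).symm
    rwa [hfe0] at h
  have h1 : HasDerivAt (fun s => ⟪G (γ s), P (γ s)⟫) (⟪G x₀, Q⟫ + ⟪P x₀, P x₀⟫) 0 := by
    have h := hgg0.inner ℝ hpp0
    simpa only [hγ0] using h
  have h2 : HasDerivAt (fun s => ⟪G (γ s), v⟫) (⟪P x₀, v⟫) 0 := by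
    have h := hgg0.inner ℝ (hasDerivAt_const 0 v)
    simpa only [hγ0, inner_zero_right, zero_add] using h
  have h3 : HasDerivAt (fun s => ⟪G (γ s), G (γ s)⟫) (⟪G x₀, P x₀⟫ + ⟪P x₀, G x₀⟫) 0 := by
    have h := hgg0.inner ℝ hgg0
    simpa only [hγ0] using h
  have h4 : HasDerivAt (fun s => Real.exp (2*A*u (γ s)))
      (Real.exp (2*A*u (γ 0)) * (2*A*⟪G x₀, v⟫)) 0 :=
    (hau0.const_mul (2*A)).exp
  have total := ((h1.const_mul 2).add ((h2.mul h3).const_mul (2*A))).mul h4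
  set S : ℝ := ⟪P x₀, P x₀⟫ + ⟪G x₀, Q⟫ + A * ⟪P x₀, v⟫ * ⟪G x₀, G x₀⟫
      + 2 * A * ⟪G x₀, v⟫ * ⟪G x₀, P x₀⟫ with hSdef
  have hD : HasDerivAt φ₁
      (Real.exp (2*A*u x₀) * (2*S)
        + (⟪G x₀, P x₀⟫ + A*(⟪G x₀, v⟫*⟪G x₀, G x₀⟫))
          * (4*A*⟪G x₀, v⟫*Real.exp (2*A*u x₀))) 0 := by
    refine HasDerivAt.congr_deriv total ?_
    simp only [hγ0, hSdef, Pi.add_apply, Pi.mul_apply]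
    rw [real_inner_comm (P x₀) (G x₀)]
    ring
  have hDle := snd_deriv_test_aux hmaxφ hd hD
  rw [hfirst, zero_mul, add_zero] at hDle
  have hSle : S ≤ 0 := by
    nlinarith [Real.exp_pos (2*A*u x₀)]
  have hP0 : fderiv ℝ G x₀ v = P x₀ := rfl
  constructor
  · rw [hP0]; linarith
  · exact hSle

end Bridges

set_option maxHeartbeats 1000000 in
/-- Second-order test inequalities at an interior maximum `x₀` of
`w(x) = ‖∇u(x)‖e^{Au(x)}` with `∇u(x₀) ≠ 0`, `e₁ = ∇u(x₀)/‖∇u(x₀)‖`: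
(i) `D³u(x₀)(e₁, e₁, e₁) ≤ 2A²‖∇u(x₀)‖³`; (ii) for every unit vector `v ⟂ ∇u(x₀)`,
`D³u(x₀)(v, v, e₁) ≤ −A‖∇u(x₀)‖·D²u(x₀)(v, v)`. -/
theorem second_order_test_inequalities (n : ℕ) (hn : 2 ≤ n) (A : ℝ)
    (u : EuclideanSpace ℝ (Fin n) → ℝ) (x₀ : EuclideanSpace ℝ (Fin n))
    (U : Set (EuclideanSpace ℝ (Fin n))) (hU : U ∈ nhds x₀) (hu : ContDiffOn ℝ 3 u U)
    (hmax : IsLocalMax (fun x => ‖gradient u x‖ * Real.exp (A * u x)) x₀)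
    (hgrad : gradient u x₀ ≠ 0) :
    thirdDeriv u x₀ (‖gradient u x₀‖⁻¹ • gradient u x₀)
        (‖gradient u x₀‖⁻¹ • gradient u x₀) (‖gradient u x₀‖⁻¹ • gradient u x₀)
      ≤ 2 * A ^ 2 * ‖gradient u x₀‖ ^ 3 ∧
    ∀ v : EuclideanSpace ℝ (Fin n), ‖v‖ = 1 → ⟪gradient u x₀, v⟫ = 0 →
      thirdDeriv u x₀ v v (‖gradient u x₀‖⁻¹ • gradient u x₀)
        ≤ -A * ‖gradient u x₀‖ * hess u x₀ v v := by
  classical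
  have hu3 : ∀ᶠ y in nhds x₀, ContDiffAt ℝ 3 u y := by
    filter_upwards [interior_mem_nhds.mpr hU] with y hy
    exact hu.contDiffAt (mem_nhds_iff.mpr ⟨interior U, interior_subset, isOpen_interior, hy⟩)
  have hx3 : ContDiffAt ℝ 3 u x₀ := hu3.self_of_nhds
  have hx2 : ContDiffAt ℝ 2 u x₀ := hx3.of_le (by norm_num)
  set g : EuclideanSpace ℝ (Fin n) := gradient u x₀ with hgdef
  set ρ : ℝ := ‖g‖ with hρdef
  have hρ : 0 < ρ := norm_pos_iff.mpr hgrad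
  have hq : ⟪g, g⟫ = ρ^2 := real_inner_self_eq_norm_sq g
  constructor
  · -- (i)
    obtain ⟨hf, hs⟩ := key_conditions A hu3 hmax (ρ⁻¹ • g)
    rw [← hgdef] at hf hs
    set Pg : EuclideanSpace ℝ (Fin n) := fderiv ℝ (gradient u) x₀ g with hPgdef
    have hmapsmul : fderiv ℝ (gradient u) x₀ (ρ⁻¹ • g) = ρ⁻¹ • Pg :=
      (fderiv ℝ (gradient u) x₀).map_smul ρ⁻¹ g
    have hρne : ρ ≠ 0 := ne_of_gt hρ
    -- first-order condition gives ⟪g, Pg⟫ = -A ρ⁴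
    rw [hmapsmul, real_inner_smul_right, real_inner_smul_right, hq] at hf
    set H : ℝ := ⟪g, Pg⟫ with hHdef
    set N : ℝ := ⟪Pg, Pg⟫ with hNdef
    have hH : H = -(A * ρ^4) := by
      field_simp at hf
      nlinarith [hf, hρ]
    -- the Q-term
    have hPdiff : DifferentiableAt ℝ (fun y => fderiv ℝ (gradient u) y g) x₀ :=
      fderiv_gradient_eventually hu3 g
    have hQfun : (fun y => fderiv ℝ (gradient u) y (ρ⁻¹ • g)) =
        fun y => ρ⁻¹ • (fun y' => fderiv ℝ (gradient u) y' g) y := by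
      funext y
      exact (fderiv ℝ (gradient u) y).map_smul _ _
    set Qg : EuclideanSpace ℝ (Fin n) :=
      fderiv ℝ (fun y => fderiv ℝ (gradient u) y g) x₀ g with hQgdef
    have hQ1 : fderiv ℝ (fun y => fderiv ℝ (gradient u) y (ρ⁻¹ • g)) x₀ (ρ⁻¹ • g)
        = ρ⁻¹ • (ρ⁻¹ • Qg) := by
      rw [hQfun, fderiv_fun_const_smul hPdiff]
      simp only [ContinuousLinearMap.coe_smul', Pi.smul_apply, map_smul, hQgdef]
      try rw [smul_comm]
    set T : ℝ := thirdDeriv u x₀ g g g with hTdef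
    have hT : ⟪g, Qg⟫ = T := by
      rw [real_inner_comm, hTdef, hQgdef]
      exact inner_fderiv2_gradient hu3 g g g
    -- clean up hs
    rw [hmapsmul, hQ1] at hs
    rw [real_inner_smul_left, real_inner_smul_right, real_inner_smul_right,
      real_inner_smul_right, real_inner_smul_left, real_inner_smul_right,
      real_inner_smul_right, real_inner_smul_right, hq, hT] at hs
    have hPgg : ⟪Pg, g⟫ = H := by rw [hHdef]; exact real_inner_comm _ _
    rw [hPgg] at hs
    rw [← hNdef, ← hHdef] at hs
    -- hs is now a scalar inequality
    have hCS : H * H ≤ ρ^2 * N := by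
      rw [hHdef, hNdef]
      have := real_inner_mul_inner_self_le g Pg
      rwa [hq] at this
    have hN0 : (0:ℝ) ≤ N := by rw [hNdef]; exact real_inner_self_nonneg
    clear_value H N T
    have hs2 : N + T + A*H*ρ^2 + 2*A*ρ^2*H ≤ 0 := by
      have hmul := mul_le_mul_of_nonneg_left hs (le_of_lt (show (0:ℝ) < ρ^2 by positivity))
      have hid : ρ^2 * (ρ⁻¹ * (ρ⁻¹ * N) + ρ⁻¹ * (ρ⁻¹ * T)
          + A * (ρ⁻¹ * (ρ⁻¹ * H)) * ρ^2 + 2 * A * (ρ⁻¹ * ρ^2) * (ρ⁻¹ * H))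
          = N + T + A*H*ρ^2 + 2*A*ρ^2*H := by
        field_simp
        try ring
      calc N + T + A*H*ρ^2 + 2*A*ρ^2*H = ρ^2 * (ρ⁻¹ * (ρ⁻¹ * N) + ρ⁻¹ * (ρ⁻¹ * T)
          + A * (ρ⁻¹ * (ρ⁻¹ * H)) * ρ^2 + 2 * A * (ρ⁻¹ * ρ^2) * (ρ⁻¹ * H)) := hid.symm
        _ ≤ ρ^2 * 0 := by
            apply mul_le_mul_of_nonneg_left _ (le_of_lt (show (0:ℝ) < ρ^2 by positivity))
            convert hs using 1
            try ring
        _ = 0 := mul_zero _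
    rw [hH] at hCS hs2
    have hN6 : A^2*ρ^6 ≤ N := by
      nlinarith [hCS, mul_pos hρ hρ, sq_nonneg A]
    have hT6 : T ≤ 2*A^2*ρ^6 := by nlinarith [hs2, hN6]
    -- reduce the goal to T
    have hred : thirdDeriv u x₀ (ρ⁻¹ • g) (ρ⁻¹ • g) (ρ⁻¹ • g) = ρ⁻¹*(ρ⁻¹*(ρ⁻¹*T)) := by
      calc thirdDeriv u x₀ (ρ⁻¹ • g) (ρ⁻¹ • g) (ρ⁻¹ • g)
          = ρ⁻¹ * thirdDeriv u x₀ (ρ⁻¹ • g) (ρ⁻¹ • g) g := third_smul3 _ _ _ _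
        _ = ρ⁻¹ * thirdDeriv u x₀ (ρ⁻¹ • g) g (ρ⁻¹ • g) := by rw [third_symm23 hu3]
        _ = ρ⁻¹ * (ρ⁻¹ * thirdDeriv u x₀ (ρ⁻¹ • g) g g) := by rw [third_smul3]
        _ = ρ⁻¹ * (ρ⁻¹ * thirdDeriv u x₀ g (ρ⁻¹ • g) g) := by rw [third_symm12 hu3]
        _ = ρ⁻¹ * (ρ⁻¹ * thirdDeriv u x₀ g g (ρ⁻¹ • g)) := by rw [third_symm23 hu3]
        _ = ρ⁻¹ * (ρ⁻¹ * (ρ⁻¹ * T)) := by rw [third_smul3, hTdef]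
    rw [hred]
    rw [show ρ⁻¹*(ρ⁻¹*(ρ⁻¹*T)) = T * (ρ^3)⁻¹ by ring, ← div_eq_mul_inv,
      div_le_iff₀ (by positivity)]
    nlinarith [hT6]
  · -- (ii)
    intro v hv1 hv0
    obtain ⟨hf, hs⟩ := key_conditions A hu3 hmax v
    rw [← hgdef] at hf hs
    set Pv : EuclideanSpace ℝ (Fin n) := fderiv ℝ (gradient u) x₀ v with hPvdef
    rw [hv0, mul_zero, zero_mul, add_zero] at hf
    rw [hv0, mul_zero, zero_mul, add_zero] at hs
    set Qv : EuclideanSpace ℝ (Fin n) :=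
      fderiv ℝ (fun y => fderiv ℝ (gradient u) y v) x₀ v with hQvdef
    set Tv : ℝ := thirdDeriv u x₀ v v g with hTvdef
    have hQT : ⟪g, Qv⟫ = Tv := by
      rw [real_inner_comm, hTvdef, hQvdef]
      calc ⟪fderiv ℝ (fun y => fderiv ℝ (gradient u) y v) x₀ v, g⟫
          = thirdDeriv u x₀ g v v := inner_fderiv2_gradient hu3 v v g
        _ = thirdDeriv u x₀ v g v := third_symm12 hu3 g v v
        _ = thirdDeriv u x₀ v v g := third_symm23 hu3 v g v
    have hhess : ⟪Pv, v⟫ = hess u x₀ v v := inner_fderiv_gradient_hess hx2 v v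
    rw [hQT, hhess, hq] at hs
    clear_value Tv
    have hPv0 : (0:ℝ) ≤ ⟪Pv, Pv⟫ := real_inner_self_nonneg
    -- goal: thirdDeriv u x₀ v v (ρ⁻¹ • g) ≤ -A * ρ * hess u x₀ v v
    have hred : thirdDeriv u x₀ v v (ρ⁻¹ • g) = ρ⁻¹ * Tv := by
      rw [third_smul3, hTvdef]
    rw [hred]
    have hTv : Tv ≤ -(A * ρ^2 * hess u x₀ v v) := by nlinarith [hs, hPv0]
    rw [show ρ⁻¹ * Tv = Tv * ρ⁻¹ by ring, ← div_eq_mul_inv, div_le_iff₀ hρ]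
    nlinarith [hTv]
end

section
/- Let n ≥ 2, A ∈ ℝ, and let u : ℝⁿ → ℝ (ℝⁿ = EuclideanSpace ℝ (Fin n)) be twice continuously differentiable on a neighborhood of x₀ ∈ ℝⁿ. Suppose x₀ is a local maximum of x ↦ ‖∇u(x)‖·e^{A·u(x)}, that ∇u(x₀) ≠ 0, and that u satisfies the prescribed mean curvature equation for H at the point x₀, i.e. (1+‖∇u(x₀)‖²)·Δu(x₀) − D²u(x₀)(∇u(x₀), ∇u(x₀)) = n·H₀·(1+‖∇u(x₀)‖²)^(3/2) with H₀ = H(x₀, u(x₀)). Then, with W₀ = √(1+‖∇u(x₀)‖²): Δu(x₀) = n·H₀·W₀ + A·‖∇u(x₀)‖²/W₀² − A·‖∇u(x₀)‖². -/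
/-- Laplacian `Δu(x)`, the trace of the Hessian. -/
noncomputable def lap {n : ℕ} (u : EuclideanSpace ℝ (Fin n) → ℝ)
    (x : EuclideanSpace ℝ (Fin n)) : ℝ :=
  ∑ i, hess u x (EuclideanSpace.single i 1) (EuclideanSpace.single i 1)

/-- At an interior maximum of `‖∇u‖e^{Au}` with nonvanishing gradient,
`D²u(x₀)(∇u(x₀), ∇u(x₀)) = -A‖∇u(x₀)‖⁴`. -/
private lemma hess_key (n : ℕ) (A : ℝ)
    (u : EuclideanSpace ℝ (Fin n) → ℝ) (x₀ : EuclideanSpace ℝ (Fin n))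
    (U : Set (EuclideanSpace ℝ (Fin n))) (hU : U ∈ nhds x₀) (hu : ContDiffOn ℝ 2 u U)
    (hmax : IsLocalMax (fun x => ‖gradient u x‖ * Real.exp (A * u x)) x₀)
    (hgrad : gradient u x₀ ≠ 0) :
    hess u x₀ (gradient u x₀) (gradient u x₀) = -A * ‖gradient u x₀‖ ^ 4 := by
  set g := gradient u x₀ with hgdef
  have hfd : ∀ y v, fderiv ℝ u y v = (inner ℝ (gradient u y) v : ℝ) := by
    intro y v
    have : fderiv ℝ u y = InnerProductSpace.toDual ℝ _ (gradient u y) := by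
      simp [gradient]
    rw [this, InnerProductSpace.toDual_apply_apply]
  have hcd : ContDiffAt ℝ 2 u x₀ := hu.contDiffAt hU
  have hφ : DifferentiableAt ℝ (fderiv ℝ u) x₀ :=
    (hcd.fderiv_right (le_refl 2)).differentiableAt one_ne_zero
  have hGdiff : DifferentiableAt ℝ (gradient u) x₀ := by
    have h1 := ((InnerProductSpace.toDual ℝ
      (EuclideanSpace ℝ (Fin n))).symm.toContinuousLinearEquiv.differentiableAt).comp x₀ hφ
    exact h1
  set G' := fderiv ℝ (gradient u) x₀ with hG'def
  have hG' : HasFDerivAt (gradient u) G' x₀ := hGdiff.hasFDerivAt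
  have hud : HasFDerivAt u (fderiv ℝ u x₀) x₀ :=
    (hcd.differentiableAt (by norm_num)).hasFDerivAt
  -- x₀ is a local max of the square
  have hmax2 : IsLocalMax
      (fun x => (inner ℝ (gradient u x) (gradient u x) : ℝ) * Real.exp (2 * A * u x)) x₀ := by
    have h2 : IsLocalMax (fun x => (‖gradient u x‖ * Real.exp (A * u x)) ^ 2) x₀ :=
      hmax.mono fun x hx => pow_le_pow_left₀ (by positivity) hx 2
    have : (fun x => (‖gradient u x‖ * Real.exp (A * u x)) ^ 2)
        = fun x => (inner ℝ (gradient u x) (gradient u x) : ℝ) * Real.exp (2 * A * u x) := by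
      funext x
      rw [mul_pow, ← Real.exp_nat_mul, real_inner_self_eq_norm_sq]
      ring_nf
    rwa [this] at h2
  -- derivative of the square
  have hinner := hG'.inner ℝ hG'
  have hexp : HasFDerivAt (fun x => Real.exp (2 * A * u x))
      (Real.exp (2 * A * u x₀) • ((2 * A) • fderiv ℝ u x₀)) x₀ :=
    (hud.const_mul (2 * A)).exp
  have hprod := hinner.mul hexp
  have hzero := hmax2.hasFDerivAt_eq_zero hprod
  have hkey := congrFun (congrArg DFunLike.coe hzero) g
  simp only [ContinuousLinearMap.add_apply, ContinuousLinearMap.smul_apply,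
    ContinuousLinearMap.comp_apply, ContinuousLinearMap.prod_apply, fderivInnerCLM_apply,
    ContinuousLinearMap.zero_apply, smul_eq_mul] at hkey
  rw [hfd, real_inner_self_eq_norm_sq, real_inner_comm (gradient u x₀)] at hkey
  have hexpne : Real.exp (2 * A * u x₀) ≠ 0 := Real.exp_ne_zero _
  have hkey2 : (inner ℝ g (G' g) : ℝ) = -A * ‖g‖ ^ 4 := by
    have hgn : (0:ℝ) < ‖g‖ ^ 2 := pow_pos (norm_pos_iff.mpr hgrad) 2
    nlinarith [hkey, Real.exp_pos (2 * A * u x₀)]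
  -- hess equals inner g (G' g)
  have hhess : hess u x₀ g g = (inner ℝ g (G' g) : ℝ) := by
    have hfun : (fun y => fderiv ℝ u y g) = fun y => (inner ℝ (gradient u y) g : ℝ) := by
      funext y; exact hfd y g
    have hc : HasFDerivAt (fun _ : EuclideanSpace ℝ (Fin n) => g)
        (0 : EuclideanSpace ℝ (Fin n) →L[ℝ] EuclideanSpace ℝ (Fin n)) x₀ :=
      hasFDerivAt_const g x₀
    have hder := hG'.inner ℝ hc
    have := hder.fderiv
    rw [hess, hfun, this]
    simp only [fderivInnerCLM_apply, ContinuousLinearMap.comp_apply,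
      ContinuousLinearMap.prod_apply, ContinuousLinearMap.zero_apply, inner_zero_right, zero_add]
    exact real_inner_comm _ _
  rw [hhess, hkey2]

/-- Identity (44) of the paper: at an interior maximum of `w(x) = ‖∇u(x)‖e^{Au(x)}` with
`∇u(x₀) ≠ 0`, if `u` satisfies the prescribed mean curvature equation at `x₀` with value
`H₀`, then `Δu(x₀) = nH₀W₀ + A‖∇u(x₀)‖²/W₀² − A‖∇u(x₀)‖²` where `W₀ = √(1+‖∇u(x₀)‖²)`. -/
theorem laplacian_at_max_point (n : ℕ) (hn : 2 ≤ n) (A H₀ : ℝ)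
    (u : EuclideanSpace ℝ (Fin n) → ℝ) (x₀ : EuclideanSpace ℝ (Fin n))
    (U : Set (EuclideanSpace ℝ (Fin n))) (hU : U ∈ nhds x₀) (hu : ContDiffOn ℝ 2 u U)
    (hmax : IsLocalMax (fun x => ‖gradient u x‖ * Real.exp (A * u x)) x₀)
    (hgrad : gradient u x₀ ≠ 0)
    (heq : (1 + ‖gradient u x₀‖ ^ 2) * lap u x₀
        - hess u x₀ (gradient u x₀) (gradient u x₀)
      = (n : ℝ) * H₀ * (1 + ‖gradient u x₀‖ ^ 2) ^ ((3 : ℝ) / 2)) :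
    lap u x₀ = (n : ℝ) * H₀ * Real.sqrt (1 + ‖gradient u x₀‖ ^ 2)
      + A * ‖gradient u x₀‖ ^ 2 / (Real.sqrt (1 + ‖gradient u x₀‖ ^ 2)) ^ 2
      - A * ‖gradient u x₀‖ ^ 2 := by
  have hkey := hess_key n A u x₀ U hU hu hmax hgrad
  set G := ‖gradient u x₀‖ with hG
  have ht : (0:ℝ) < 1 + G ^ 2 := by positivity
  have h32 : (1 + G ^ 2) ^ ((3:ℝ)/2) = (1 + G ^ 2) * Real.sqrt (1 + G ^ 2) := by
    rw [show (3:ℝ)/2 = 1 + 1/2 by norm_num, Real.rpow_add ht, Real.rpow_one,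
      Real.sqrt_eq_rpow]
  rw [hkey, h32] at heq
  rw [Real.sq_sqrt ht.le]
  have hW : Real.sqrt (1 + G ^ 2) ≠ 0 := by positivity
  field_simp
  linear_combination heq
end
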